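/- Let p = 2q be an even integer with q ≥ 1, let (κ_s)_{s≥1} be a real sequence, and let (m_n)_{n≥0} be the real sequence defined by m_0 = 1 and, for n ≥ 1, m_n = Σ_{s=1}^{n} κ_s · Σ_{(i_1,…,i_{sq}) ∈ ℕ^{sq}, i_1+…+i_{sq} = n−s} Π_{j=1}^{sq} m_{i_j}. Then the sequence (m_n) is exponentially bounded (there exists A > 0 with |m_n| ≤ A^n for all n ≥ 1) if and only if the sequence (κ_n) is exponentially bounded (there exists B > 0 with |κ_n| ≤ B^n for all n ≥ 1). -/

import Mathlib

open Finset


/-- The weight sequence `1/(n+1)^2`. -/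
noncomputable def wc (n : ℕ) : ℝ := 1 / ((n : ℝ) + 1) ^ 2

lemma wc_pos (n : ℕ) : 0 < wc n := by unfold wc; positivity

lemma wc_nonneg (n : ℕ) : 0 ≤ wc n := (wc_pos n).le

lemma wc_le_one (n : ℕ) : wc n ≤ 1 := by
  unfold wc
  rw [div_le_one (by positivity)]
  nlinarith [Nat.cast_nonneg (α := ℝ) n]

lemma wc_zero : wc 0 = 1 := by norm_num [wc]

lemma wc_pair {i j n : ℕ} (h : i + j = n) :
    wc i * wc j ≤ 4 * wc n * (wc i + wc j) := by
  have hc : (i : ℝ) + (j : ℝ) = n := by exact_mod_cast congrArg (Nat.cast (R := ℝ)) h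
  have hi : (0:ℝ) < ((i:ℝ)+1)^2 := by positivity
  have hj : (0:ℝ) < ((j:ℝ)+1)^2 := by positivity
  have hn : (0:ℝ) < ((n:ℝ)+1)^2 := by positivity
  have key : ((n:ℝ)+1)^2 ≤ 4 * (((i:ℝ)+1)^2 + ((j:ℝ)+1)^2) := by
    rw [← hc]
    nlinarith [sq_nonneg ((i:ℝ)-(j:ℝ)), Nat.cast_nonneg (α := ℝ) i, Nat.cast_nonneg (α := ℝ) j]
  have e1 : wc i * wc j = 1 / (((i:ℝ)+1)^2 * ((j:ℝ)+1)^2) := by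
    unfold wc; rw [div_mul_div_comm, one_mul]
  have e2 : 4 * wc n * (wc i + wc j)
      = (4 * (((i:ℝ)+1)^2 + ((j:ℝ)+1)^2)) / (((n:ℝ)+1)^2 * (((i:ℝ)+1)^2 * ((j:ℝ)+1)^2)) := by
    unfold wc; field_simp; ring
  rw [e1, e2, div_le_div_iff₀ (by positivity) (by positivity)]
  nlinarith [mul_pos hi hj, mul_le_mul_of_nonneg_right key (le_of_lt (mul_pos hi hj))]

lemma wc_pair' {i j n : ℕ} (h : i + j = n) : wc i * wc j ≤ 8 * wc n := by
  have := wc_pair h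
  have h2 : wc i + wc j ≤ 2 := by
    have := wc_le_one i; have := wc_le_one j; linarith
  calc wc i * wc j ≤ 4 * wc n * (wc i + wc j) := this
    _ ≤ 4 * wc n * 2 := by
        have := wc_nonneg n
        nlinarith
    _ = 8 * wc n := by ring

lemma wc_sum (n : ℕ) : ∑ k ∈ range n, wc k ≤ 2 - 2 / ((n : ℝ) + 1) := by
  induction n with
  | zero => norm_num
  | succ n ih =>
      rw [Finset.sum_range_succ]
      have h1 : (0:ℝ) < (n:ℝ) + 1 := by positivity
      have h2 : (0:ℝ) < (n:ℝ) + 2 := by positivity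
      have : wc n + 2 / ((n:ℝ) + 2) ≤ 2 / ((n:ℝ)+1) := by
        unfold wc
        rw [div_add_div _ _ (by positivity) (ne_of_gt h2), div_le_div_iff₀ (by positivity) h1]
        push_cast
        ring_nf
        nlinarith [sq_nonneg ((n:ℝ)+1)]
      push_cast at this ⊢
      rw [show (n:ℝ)+1+1 = (n:ℝ)+2 by ring]
      linarith

lemma wc_sum' (n : ℕ) : ∑ k ∈ range n, wc k ≤ 2 := by
  have := wc_sum n
  have : (0:ℝ) < 2 / ((n:ℝ)+1) := by positivity
  linarith [wc_sum n]

lemma wc_conv (n : ℕ) :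
    ∑ p ∈ antidiagonal n, wc p.1 * wc p.2 ≤ 16 * wc n := by
  have step1 : ∑ p ∈ antidiagonal n, wc p.1 * wc p.2
      ≤ ∑ p ∈ antidiagonal n, 4 * wc n * (wc p.1 + wc p.2) := by
    apply Finset.sum_le_sum
    intro p hp
    exact wc_pair (Finset.HasAntidiagonal.mem_antidiagonal.mp hp)
  have step2 : ∑ p ∈ antidiagonal n, (wc p.1 + wc p.2)
      ≤ 4 := by
    rw [Finset.sum_add_distrib]
    have e1 : ∑ p ∈ antidiagonal n, wc p.1 = ∑ k ∈ range (n+1), wc k := by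
      rw [Finset.Nat.sum_antidiagonal_eq_sum_range_succ_mk]
    have e2 : ∑ p ∈ antidiagonal n, wc p.2 = ∑ k ∈ range (n+1), wc (n - k) := by
      rw [Finset.Nat.sum_antidiagonal_eq_sum_range_succ_mk]
    have e3 : ∑ k ∈ range (n+1), wc (n - k) = ∑ k ∈ range (n+1), wc k := by
      rw [← Finset.sum_range_reflect]
      apply Finset.sum_congr rfl
      intro k hk
      have := Finset.mem_range.mp hk
      congr 1
      omega
    rw [e1, e2, e3]
    have := wc_sum' (n+1)
    linarith
  calc ∑ p ∈ antidiagonal n, wc p.1 * wc p.2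
      ≤ ∑ p ∈ antidiagonal n, 4 * wc n * (wc p.1 + wc p.2) := step1
    _ = 4 * wc n * ∑ p ∈ antidiagonal n, (wc p.1 + wc p.2) := by rw [Finset.mul_sum]
    _ ≤ 4 * wc n * 4 := by
        have := wc_nonneg n
        nlinarith
    _ = 16 * wc n := by ring

lemma sq_le_four_pow (s : ℕ) : ((s:ℝ)+1)^2 ≤ 4 ^ s := by
  induction s with
  | zero => norm_num
  | succ s ih =>
      have h1 : (0:ℝ) ≤ (s:ℝ) := Nat.cast_nonneg s
      push_cast
      calc ((s:ℝ)+1+1)^2 ≤ 4 * ((s:ℝ)+1)^2 := by nlinarith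
        _ ≤ 4 * 4 ^ s := by linarith
        _ = 4 ^ (s+1) := by rw [pow_succ]; ring

lemma wc_ratio {s n : ℕ} (h : s ≤ n) : wc (n - s) ≤ 4 ^ s * wc n := by
  have key : ((n:ℝ)+1)^2 ≤ ((s:ℝ)+1)^2 * (((n-s : ℕ):ℝ)+1)^2 := by
    have hc : ((n - s : ℕ) : ℝ) = (n:ℝ) - (s:ℝ) := by
      push_cast [Nat.cast_sub h]; ring
    rw [hc]
    have h1 : (s:ℝ) ≤ (n:ℝ) := by exact_mod_cast h
    have h2 : (0:ℝ) ≤ (s:ℝ) := Nat.cast_nonneg s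
    nlinarith [mul_nonneg h2 (sub_nonneg.mpr h1)]
  have h1 : (0:ℝ) < (((n-s : ℕ):ℝ)+1)^2 := by positivity
  have h2 : (0:ℝ) < ((n:ℝ)+1)^2 := by positivity
  calc wc (n - s) = 1 / (((n-s:ℕ):ℝ)+1)^2 := rfl
    _ ≤ ((s:ℝ)+1)^2 / ((n:ℝ)+1)^2 := by
        rw [div_le_div_iff₀ h1 h2]
        nlinarith
    _ ≤ 4 ^ s * wc n := by
        unfold wc
        rw [div_eq_mul_one_div]
        have := sq_le_four_pow s
        have h3 : (0:ℝ) ≤ 1 / ((n:ℝ)+1)^2 := by positivity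
        nlinarith

lemma geom_Icc_le {r : ℝ} (h0 : 0 ≤ r) (h1 : r < 1) (n : ℕ) :
    ∑ k ∈ Icc 1 n, r ^ k ≤ r / (1 - r) := by
  have key : ∑ k ∈ Icc 1 n, r ^ k = r * ∑ k ∈ range n, r ^ k := by
    induction n with
    | zero => simp
    | succ n ih =>
        rw [Finset.sum_Icc_succ_top (by omega), ih, Finset.sum_range_succ]
        ring
  rw [key]
  have h2 : (0:ℝ) < 1 - r := by linarith
  clear key
  have h3 : ∑ k ∈ range n, r ^ k ≤ 1 / (1 - r) := by
    induction n with
    | zero => simp; exact h1.le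
    | succ n ih =>
        rw [Finset.sum_range_succ']
        have e : ∑ i ∈ range n, r ^ (i+1) = r * ∑ i ∈ range n, r ^ i := by
          rw [Finset.mul_sum]
          exact Finset.sum_congr rfl fun i _ => by rw [pow_succ']
        rw [e]
        have h4 : r * ∑ i ∈ range n, r ^ i ≤ r * (1/(1-r)) :=
          mul_le_mul_of_nonneg_left ih h0
        have h5 : r * (1/(1-r)) + 1 = 1/(1-r) := by field_simp; ring
        simp only [pow_zero]
        linarith
  calc r * ∑ k ∈ range n, r ^ k ≤ r * (1 / (1-r)) := mul_le_mul_of_nonneg_left h3 h0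
    _ = r / (1-r) := by ring

lemma sum_antidiagonalTuple_succ (f : ℕ → ℝ) (k n : ℕ) :
    ∑ i ∈ Finset.Nat.antidiagonalTuple (k+1) n, ∏ j, f (i j)
      = ∑ p ∈ antidiagonal n, f p.1 * ∑ t ∈ Finset.Nat.antidiagonalTuple k p.2, ∏ j, f (t j) := by
  have e1 : ∑ p ∈ antidiagonal n, f p.1 * ∑ t ∈ Finset.Nat.antidiagonalTuple k p.2, ∏ j, f (t j)
      = ∑ x ∈ (antidiagonal n).sigma (fun p => Finset.Nat.antidiagonalTuple k p.2),
          f x.1.1 * ∏ j, f (x.2 j) := by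
    rw [Finset.sum_sigma]
    exact Finset.sum_congr rfl fun p _ => by rw [Finset.mul_sum]
  rw [e1]
  symm
  apply Finset.sum_nbij' (i := fun x => Fin.cons x.1.1 x.2)
    (j := fun i => ⟨(i 0, ∑ j, Fin.tail i j), Fin.tail i⟩)
  · rintro ⟨⟨a, b⟩, t⟩ hx
    simp only [Finset.mem_sigma, Finset.HasAntidiagonal.mem_antidiagonal, Finset.Nat.mem_antidiagonalTuple] at hx
    rw [Finset.Nat.mem_antidiagonalTuple, Fin.sum_univ_succ]
    simp only [Fin.cons_zero, Fin.cons_succ]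
    rw [hx.2]
    exact hx.1
  · intro i hi
    rw [Finset.Nat.mem_antidiagonalTuple] at hi
    simp only [Finset.mem_sigma, Finset.HasAntidiagonal.mem_antidiagonal, Finset.Nat.mem_antidiagonalTuple]
    constructor
    · rw [← hi, Fin.sum_univ_succ]; rfl
    · trivial
  · rintro ⟨⟨a, b⟩, t⟩ hx
    simp only [Finset.mem_sigma, Finset.HasAntidiagonal.mem_antidiagonal, Finset.Nat.mem_antidiagonalTuple] at hx
    simp only [Fin.cons_zero, Fin.tail_cons]
    congr 1
    rw [hx.2]
  · intro i hi
    simp only [Fin.cons_self_tail]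
  · rintro ⟨⟨a, b⟩, t⟩ hx
    simp only [Fin.prod_univ_succ, Fin.cons_zero, Fin.cons_succ]

lemma tuple_conv : ∀ k, 1 ≤ k → ∀ n : ℕ,
    ∑ i ∈ Finset.Nat.antidiagonalTuple k n, ∏ j, wc (i j) ≤ 16 ^ (k-1) * wc n := by
  intro k hk
  induction k, hk using Nat.le_induction with
  | base =>
      intro n
      rw [Finset.Nat.antidiagonalTuple_one, Finset.sum_singleton]
      simp [Fin.prod_univ_one]
  | succ k hk ih =>
      intro n
      rw [sum_antidiagonalTuple_succ]
      have step : ∀ p ∈ antidiagonal n,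
          wc p.1 * ∑ t ∈ Finset.Nat.antidiagonalTuple k p.2, ∏ j, wc (t j)
            ≤ 16 ^ (k-1) * (wc p.1 * wc p.2) := by
        intro p _
        have h1 := ih p.2
        have h2 := wc_nonneg p.1
        calc wc p.1 * ∑ t ∈ Finset.Nat.antidiagonalTuple k p.2, ∏ j, wc (t j)
            ≤ wc p.1 * (16 ^ (k-1) * wc p.2) := mul_le_mul_of_nonneg_left h1 h2
          _ = 16 ^ (k-1) * (wc p.1 * wc p.2) := by ring
      calc ∑ p ∈ antidiagonal n,
            wc p.1 * ∑ t ∈ Finset.Nat.antidiagonalTuple k p.2, ∏ j, wc (t j)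
          ≤ ∑ p ∈ antidiagonal n, 16 ^ (k-1) * (wc p.1 * wc p.2) :=
            Finset.sum_le_sum step
        _ = 16 ^ (k-1) * ∑ p ∈ antidiagonal n, wc p.1 * wc p.2 := by rw [Finset.mul_sum]
        _ ≤ 16 ^ (k-1) * (16 * wc n) := by
            have h3 : (0:ℝ) ≤ 16 ^ (k-1) := by positivity
            exact mul_le_mul_of_nonneg_left (wc_conv n) h3
        _ = 16 ^ (k - 1 + 1) * wc n := by rw [pow_succ]; ring
        _ = 16 ^ (k + 1 - 1) * wc n := by congr 2; omega

lemma prod_tuple_nonneg {k : ℕ} (g : ℕ → ℝ) (hg : ∀ x, 0 ≤ g x) (i : Fin k → ℕ) :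
    0 ≤ ∏ j, g (i j) := Finset.prod_nonneg fun j _ => hg (i j)

open PowerSeries in
lemma coeff_pow_tuple (φ : PowerSeries ℝ) : ∀ (k n : ℕ),
    PowerSeries.coeff n (φ ^ k)
      = ∑ i ∈ Finset.Nat.antidiagonalTuple k n, ∏ j, PowerSeries.coeff (i j) φ := by
  intro k
  induction k with
  | zero =>
      intro n
      rcases n with _ | n
      · simp [Finset.Nat.antidiagonalTuple_zero_zero]
      · simp [Finset.Nat.antidiagonalTuple_zero_succ, PowerSeries.coeff_one]
  | succ k ih =>
      intro n
      have key := sum_antidiagonalTuple_succ (fun d => PowerSeries.coeff d φ) k n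
      rw [pow_succ', PowerSeries.coeff_mul]
      rw [key]
      exact Finset.sum_congr rfl fun p _ => by rw [ih p.2]

lemma moment_bound (q : ℕ) (hq : 1 ≤ q) (κ m : ℕ → ℝ) (B : ℝ) (hB : 0 < B)
    (hm0 : m 0 = 1)
    (hκ : ∀ s, 1 ≤ s → |κ s| ≤ B ^ s)
    (hrec : ∀ n : ℕ, 1 ≤ n →
      m n = ∑ s ∈ Finset.Icc 1 n, κ s *
        ∑ i ∈ Finset.Nat.antidiagonalTuple (s * q) (n - s), ∏ j, m (i j)) :
    ∀ n : ℕ, |m n| ≤ wc n * (8 * B * 16 ^ q) ^ n := by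
  have h16q : (0:ℝ) < 16 ^ q := by positivity
  set A : ℝ := 8 * B * 16 ^ q with hA
  have hApos : 0 < A := by positivity
  intro n
  induction n using Nat.strong_induction_on with
  | _ n IH =>
    rcases Nat.eq_zero_or_pos n with rfl | hn
    · simp [hm0, wc_zero]
    · rw [hrec n hn]
      have term_bound : ∀ s ∈ Finset.Icc 1 n,
          |κ s * ∑ i ∈ Finset.Nat.antidiagonalTuple (s*q) (n-s), ∏ j, m (i j)|
            ≤ wc n * A ^ n * (1/2) ^ s := by
        intro s hs
        obtain ⟨hs1, hsn⟩ := Finset.mem_Icc.mp hs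
        have tub : ∀ i ∈ Finset.Nat.antidiagonalTuple (s*q) (n-s),
            |∏ j, m (i j)| ≤ (∏ j, wc (i j)) * A ^ (n - s) := by
          intro i hi
          have hsum : ∑ j, i j = n - s := Finset.Nat.mem_antidiagonalTuple.mp hi
          have hend : ∀ j, |m (i j)| ≤ wc (i j) * A ^ (i j) := by
            intro j
            have hij : i j ≤ n - s := hsum ▸ Finset.single_le_sum
              (f := fun j => i j) (fun j _ => Nat.zero_le _) (Finset.mem_univ j)
            exact IH (i j) (by omega)
          calc |∏ j, m (i j)| = ∏ j, |m (i j)| := Finset.abs_prod _ _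
            _ ≤ ∏ j, (wc (i j) * A ^ (i j)) :=
                Finset.prod_le_prod (fun j _ => abs_nonneg _) (fun j _ => hend j)
            _ = (∏ j, wc (i j)) * ∏ j, A ^ (i j) := Finset.prod_mul_distrib
            _ = (∏ j, wc (i j)) * A ^ (n - s) := by
                rw [Finset.prod_pow_eq_pow_sum, hsum]
        have hsq1 : 1 ≤ s * q := Nat.mul_pos hs1 hq
        have inner : |∑ i ∈ Finset.Nat.antidiagonalTuple (s*q) (n-s), ∏ j, m (i j)|
            ≤ 16 ^ (s*q) * (4 ^ s * wc n) * A ^ (n-s) := by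
          calc |∑ i ∈ Finset.Nat.antidiagonalTuple (s*q) (n-s), ∏ j, m (i j)|
              ≤ ∑ i ∈ Finset.Nat.antidiagonalTuple (s*q) (n-s), |∏ j, m (i j)| :=
                Finset.abs_sum_le_sum_abs _ _
            _ ≤ ∑ i ∈ Finset.Nat.antidiagonalTuple (s*q) (n-s),
                  (∏ j, wc (i j)) * A ^ (n - s) := Finset.sum_le_sum tub
            _ = (∑ i ∈ Finset.Nat.antidiagonalTuple (s*q) (n-s), ∏ j, wc (i j))
                  * A ^ (n - s) := by rw [Finset.sum_mul]
            _ ≤ (16 ^ (s*q - 1) * wc (n - s)) * A ^ (n-s) := by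
                apply mul_le_mul_of_nonneg_right (tuple_conv (s*q) hsq1 (n-s))
                positivity
            _ ≤ (16 ^ (s*q) * (4 ^ s * wc n)) * A ^ (n-s) := by
                apply mul_le_mul_of_nonneg_right _ (by positivity)
                have e1 : (16:ℝ) ^ (s*q-1) ≤ 16 ^ (s*q) :=
                  pow_le_pow_right₀ (by norm_num) (by omega)
                have e2 : wc (n - s) ≤ 4 ^ s * wc n := wc_ratio hsn
                have := wc_nonneg (n-s)
                have h4 : (0:ℝ) < 16 ^ (s*q-1) := by positivity
                nlinarith [wc_nonneg n, pow_pos (show (0:ℝ) < 4 by norm_num) s]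
        have hκs := hκ s hs1
        have habs : |κ s * ∑ i ∈ Finset.Nat.antidiagonalTuple (s*q) (n-s), ∏ j, m (i j)|
            ≤ B ^ s * (16 ^ (s*q) * (4 ^ s * wc n) * A ^ (n-s)) := by
          rw [abs_mul]
          apply mul_le_mul hκs inner (abs_nonneg _) (by positivity)
        refine habs.trans (le_of_eq ?_)
        have e16 : (16:ℝ) ^ (s*q) = ((16:ℝ)^q)^s := by rw [mul_comm s q, pow_mul]
        have epow : A ^ s * A ^ (n-s) = A ^ n := by
          rw [← pow_add]; congr 1; omega
        have : B ^ s * (16 ^ (s*q) * (4 ^ s * wc n) * A ^ (n-s))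
            = wc n * ((4 * B * 16^q) ^ s * A ^ (n - s)) := by
          rw [e16, mul_pow, mul_pow]; ring
        rw [this]
        have e3 : (4 * B * 16^q : ℝ) = A * (1/2) := by rw [hA]; ring
        rw [e3, mul_pow, mul_assoc, mul_assoc, ← epow]
        ring
      calc |∑ s ∈ Finset.Icc 1 n, κ s *
            ∑ i ∈ Finset.Nat.antidiagonalTuple (s*q) (n-s), ∏ j, m (i j)|
          ≤ ∑ s ∈ Finset.Icc 1 n, |κ s *
            ∑ i ∈ Finset.Nat.antidiagonalTuple (s*q) (n-s), ∏ j, m (i j)| :=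
            Finset.abs_sum_le_sum_abs _ _
        _ ≤ ∑ s ∈ Finset.Icc 1 n, wc n * A ^ n * (1/2) ^ s :=
            Finset.sum_le_sum term_bound
        _ = wc n * A ^ n * ∑ s ∈ Finset.Icc 1 n, (1/2) ^ s := by rw [Finset.mul_sum]
        _ ≤ wc n * A ^ n * 1 := by
            apply mul_le_mul_of_nonneg_left _
              (mul_nonneg (wc_nonneg n) (pow_nonneg hApos.le n))
            have := geom_Icc_le (r := 1/2) (by norm_num) (by norm_num) n
            calc ∑ s ∈ Finset.Icc 1 n, ((1:ℝ)/2) ^ s ≤ (1/2) / (1 - 1/2) := this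
              _ = 1 := by norm_num
        _ = wc n * A ^ n := mul_one _

lemma recip_bound (x y : ℕ → ℝ) (X : ℝ) (hX : 0 < X)
    (hx0 : x 0 = 1) (hy0 : y 0 = 1)
    (hx : ∀ s, 1 ≤ s → |x s| ≤ X ^ s)
    (hrel : ∀ n, 1 ≤ n → ∑ p ∈ antidiagonal n, x p.1 * y p.2 = 0) :
    ∀ n, |y n| ≤ wc n * (36 * X) ^ n := by
  set Y := 36 * X with hY
  have hYpos : 0 < Y := by rw [hY]; positivity
  intro n
  induction n using Nat.strong_induction_on with
  | _ n IH =>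
    rcases Nat.eq_zero_or_pos n with rfl | hn
    · simp [hy0, wc_zero]
    · have key : y n = -∑ k ∈ Finset.Icc 1 n, x k * y (n - k) := by
        have h1 := hrel n hn
        rw [Finset.Nat.sum_antidiagonal_eq_sum_range_succ_mk] at h1
        have h2 : range (n+1) = insert 0 (Finset.Icc 1 n) := by
          ext a; simp [Nat.lt_succ_iff]; omega
        rw [h2, Finset.sum_insert (by simp)] at h1
        simp only [hx0, Nat.sub_zero, one_mul] at h1
        linarith
      rw [key, abs_neg]
      have tb : ∀ k ∈ Finset.Icc 1 n,
          |x k * y (n - k)| ≤ 8 * wc n * Y ^ n * (1/9)^k := by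
        intro k hk
        obtain ⟨hk1, hkn⟩ := Finset.mem_Icc.mp hk
        have h3 : (1:ℝ) ≤ wc k * 4 ^ k := by
          unfold wc
          rw [div_mul_eq_mul_div, le_div_iff₀ (by positivity), one_mul, one_mul]
          exact sq_le_four_pow k
        have h1 : |x k| ≤ wc k * (4*X) ^ k := by
          calc |x k| ≤ X ^ k := hx k hk1
            _ = 1 * X ^ k := (one_mul _).symm
            _ ≤ (wc k * 4 ^ k) * X ^ k :=
                mul_le_mul_of_nonneg_right h3 (pow_nonneg hX.le k)
            _ = wc k * (4*X)^k := by rw [mul_pow]; ring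
        have h4 : |y (n-k)| ≤ wc (n-k) * Y^(n-k) := IH (n-k) (by omega)
        calc |x k * y (n-k)| = |x k| * |y (n-k)| := abs_mul _ _
          _ ≤ (wc k * (4*X)^k) * (wc (n-k) * Y^(n-k)) :=
              mul_le_mul h1 h4 (abs_nonneg _)
                (mul_nonneg (wc_nonneg k) (by positivity))
          _ = (wc k * wc (n-k)) * ((4*X)^k * Y^(n-k)) := by ring
          _ ≤ (8 * wc n) * ((4*X)^k * Y^(n-k)) := by
              apply mul_le_mul_of_nonneg_right (wc_pair' (by omega))
              have := pow_nonneg hYpos.le (n-k)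
              positivity
          _ = 8 * wc n * Y ^ n * (1/9)^k := by
              have e1 : (4*X : ℝ) = Y * (1/9) := by rw [hY]; ring
              have e2 : Y^k * Y^(n-k) = Y^n := by rw [← pow_add]; congr 1; omega
              rw [e1, mul_pow, ← e2]; ring
      calc |∑ k ∈ Finset.Icc 1 n, x k * y (n - k)|
          ≤ ∑ k ∈ Finset.Icc 1 n, |x k * y (n - k)| := Finset.abs_sum_le_sum_abs _ _
        _ ≤ ∑ k ∈ Finset.Icc 1 n, 8 * wc n * Y ^ n * (1/9)^k := Finset.sum_le_sum tb
        _ = 8 * wc n * Y ^ n * ∑ k ∈ Finset.Icc 1 n, (1/9)^k := by rw [Finset.mul_sum]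
        _ ≤ 8 * wc n * Y ^ n * (1/8) := by
            apply mul_le_mul_of_nonneg_left _
              (by have := wc_nonneg n; have := pow_nonneg hYpos.le n; positivity)
            have := geom_Icc_le (r := 1/9) (by norm_num) (by norm_num) n
            calc ∑ k ∈ Finset.Icc 1 n, ((1:ℝ)/9) ^ k ≤ (1/9) / (1 - 1/9) := this
              _ = 1/8 := by norm_num
        _ = wc n * Y ^ n := by ring

open PowerSeries in
noncomputable def substPS (V H : PowerSeries ℝ) : PowerSeries ℝ :=
  PowerSeries.mk fun n => ∑ s ∈ range (n+1),
    PowerSeries.coeff s H * PowerSeries.coeff n (V ^ s)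

open PowerSeries

lemma coeff_substPS (V H : PowerSeries ℝ) (n : ℕ) :
    coeff n (substPS V H) = ∑ s ∈ range (n+1), coeff s H * coeff n (V ^ s) :=
  coeff_mk _ _

lemma coeff_pow_eq_zero {V : PowerSeries ℝ} (hV : constantCoeff V = 0)
    {n s : ℕ} (h : n < s) : coeff n (V ^ s) = 0 := by
  rw [coeff_pow_tuple]
  apply Finset.sum_eq_zero
  intro i hi
  have hsum : ∑ j, i j = n := Finset.Nat.mem_antidiagonalTuple.mp hi
  have hex : ∃ j, i j = 0 := by
    by_contra hno
    push_neg at hno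
    have h1 : ∀ j : Fin s, 1 ≤ i j := fun j => Nat.one_le_iff_ne_zero.mpr (hno j)
    have h2 : s ≤ ∑ j, i j := by
      calc s = ∑ _j : Fin s, 1 := by simp
        _ ≤ ∑ j, i j := Finset.sum_le_sum fun j _ => h1 j
    omega
  obtain ⟨j, hj⟩ := hex
  apply Finset.prod_eq_zero (Finset.mem_univ j)
  rw [hj, coeff_zero_eq_constantCoeff_apply, hV]

lemma coeff_substPS_ext {V : PowerSeries ℝ} (hV : constantCoeff V = 0)
    (H : PowerSeries ℝ) {n N : ℕ} (h : n ≤ N) :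
    coeff n (substPS V H) = ∑ s ∈ range (N+1), coeff s H * coeff n (V ^ s) := by
  rw [coeff_substPS]
  apply Finset.sum_subset
  · intro s hs
    simp only [Finset.mem_range] at hs ⊢
    omega
  · intro s hs hns
    simp only [Finset.mem_range] at hs hns
    rw [coeff_pow_eq_zero hV (by omega), mul_zero]

lemma substPS_one (V : PowerSeries ℝ) : substPS V 1 = 1 := by
  ext n
  rw [coeff_substPS]
  have : ∀ s ∈ range (n+1), coeff s (1 : PowerSeries ℝ) * coeff n (V ^ s)
      = if s = 0 then coeff n ((1:PowerSeries ℝ)) else 0 := by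
    intro s _
    rw [PowerSeries.coeff_one]
    split_ifs with h
    · subst h; rw [pow_zero, one_mul]
    · rw [zero_mul]
  rw [Finset.sum_congr rfl this, Finset.sum_ite_eq' (range (n+1)) 0]
  simp

lemma substPS_mul {V : PowerSeries ℝ} (hV : constantCoeff V = 0) (H₁ H₂ : PowerSeries ℝ) :
    substPS V (H₁ * H₂) = substPS V H₁ * substPS V H₂ := by
  ext n
  set F : ℕ × ℕ → ℝ := fun p => coeff p.1 H₁ * coeff p.2 H₂ * coeff n (V ^ (p.1 + p.2))
    with hF
  have hdisj : Set.PairwiseDisjoint ↑(range (n+1)) (fun s : ℕ => antidiagonal s) := by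
    intro a _ b _ hab
    simp only [Function.onFun, Finset.disjoint_left]
    intro p hpa hpb
    rw [Finset.HasAntidiagonal.mem_antidiagonal] at hpa hpb
    omega
  have hsub : (range (n+1)).biUnion (fun s => antidiagonal s) ⊆ range (n+1) ×ˢ range (n+1) := by
    intro p hp
    simp only [Finset.mem_biUnion, Finset.mem_range, Finset.HasAntidiagonal.mem_antidiagonal] at hp
    obtain ⟨s, hs, hps⟩ := hp
    simp only [Finset.mem_product, Finset.mem_range]
    omega
  have lhs_eq : coeff n (substPS V (H₁ * H₂))
      = ∑ p ∈ range (n+1) ×ˢ range (n+1), F p := by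
    rw [coeff_substPS]
    have e1 : ∀ s ∈ range (n+1), coeff s (H₁ * H₂) * coeff n (V ^ s)
        = ∑ p ∈ antidiagonal s, F p := by
      intro s _
      rw [PowerSeries.coeff_mul, Finset.sum_mul]
      apply Finset.sum_congr rfl
      intro p hp
      have := Finset.HasAntidiagonal.mem_antidiagonal.mp hp
      rw [hF]
      simp only []
      rw [this]
    rw [Finset.sum_congr rfl e1, ← Finset.sum_biUnion hdisj]
    apply Finset.sum_subset hsub
    intro p hp hnp
    simp only [Finset.mem_biUnion, Finset.mem_range, Finset.HasAntidiagonal.mem_antidiagonal] at hnp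
    have : n < p.1 + p.2 := by
      by_contra hc
      push_neg at hc
      exact hnp ⟨p.1 + p.2, by omega, rfl⟩
    rw [hF]
    simp only []
    rw [coeff_pow_eq_zero hV this, mul_zero]
  have rhs_eq : coeff n (substPS V H₁ * substPS V H₂)
      = ∑ p ∈ range (n+1) ×ˢ range (n+1), F p := by
    rw [PowerSeries.coeff_mul]
    have e1 : ∀ p ∈ antidiagonal n,
        coeff p.1 (substPS V H₁) * coeff p.2 (substPS V H₂)
          = ∑ x ∈ range (n+1) ×ˢ range (n+1),
              coeff x.1 H₁ * coeff x.2 H₂ * (coeff p.1 (V^x.1) * coeff p.2 (V^x.2)) := by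
      intro p hp
      have hp' := Finset.HasAntidiagonal.mem_antidiagonal.mp hp
      rw [coeff_substPS_ext hV H₁ (show p.1 ≤ n by omega),
          coeff_substPS_ext hV H₂ (show p.2 ≤ n by omega), Finset.sum_mul_sum,
          Finset.sum_product]
      apply Finset.sum_congr rfl; intro a _
      apply Finset.sum_congr rfl; intro b _
      ring
    rw [Finset.sum_congr rfl e1, Finset.sum_comm]
    apply Finset.sum_congr rfl
    intro x _
    rw [← Finset.mul_sum, ← PowerSeries.coeff_mul, ← pow_add]
  rw [lhs_eq, rhs_eq]

lemma substPS_pow {V : PowerSeries ℝ} (hV : constantCoeff V = 0) (H : PowerSeries ℝ)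
    (k : ℕ) : substPS V (H ^ k) = (substPS V H) ^ k := by
  induction k with
  | zero => rw [pow_zero, pow_zero, substPS_one]
  | succ k ih => rw [pow_succ, pow_succ, substPS_mul hV, ih]

lemma substPS_X {V : PowerSeries ℝ} (hV : constantCoeff V = 0) :
    substPS V X = V := by
  ext n
  rw [coeff_substPS]
  have e1 : ∀ s ∈ range (n+1), coeff s (X : PowerSeries ℝ) * coeff n (V ^ s)
      = if s = 1 then coeff n (V ^ s) else 0 := by
    intro s _
    rw [PowerSeries.coeff_X]
    split_ifs with h
    · rw [one_mul]
    · rw [zero_mul]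
  rw [Finset.sum_congr rfl e1, Finset.sum_ite_eq' (range (n+1)) 1]
  rcases Nat.eq_zero_or_pos n with rfl | hn
  · simp [coeff_zero_eq_constantCoeff_apply, hV]
  · rw [if_pos (Finset.mem_range.mpr (by omega)), pow_one]

lemma substPS_X_left (H : PowerSeries ℝ) : substPS X H = H := by
  ext n
  rw [coeff_substPS]
  have e1 : ∀ s ∈ range (n+1), coeff s H * coeff n ((X : PowerSeries ℝ) ^ s)
      = if s = n then coeff s H else 0 := by
    intro s _
    rw [PowerSeries.coeff_X_pow]
    split_ifs with h1 h2 h3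
    · rw [mul_one]
    · exact absurd h1.symm h2
    · exact absurd h3.symm h1
    · rw [mul_zero]
  rw [Finset.sum_congr rfl e1, Finset.sum_ite_eq' (range (n+1)) n]
  rw [if_pos (Finset.mem_range.mpr (by omega))]

lemma constantCoeff_substPS {V : PowerSeries ℝ} (H : PowerSeries ℝ)
    (hH : constantCoeff H = 0) : constantCoeff (substPS V H) = 0 := by
  rw [← coeff_zero_eq_constantCoeff_apply, coeff_substPS]
  simp [coeff_zero_eq_constantCoeff_apply, hH]

lemma substPS_assoc {u w : PowerSeries ℝ} (hu : constantCoeff u = 0)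
    (hw : constantCoeff w = 0) (H : PowerSeries ℝ) :
    substPS u (substPS w H) = substPS (substPS u w) H := by
  ext n
  rw [coeff_substPS, coeff_substPS]
  have e1 : ∀ t ∈ range (n+1), coeff t (substPS w H) * coeff n (u ^ t)
      = ∑ s ∈ range (n+1), coeff s H * (coeff t (w ^ s) * coeff n (u ^ t)) := by
    intro t ht
    rw [coeff_substPS_ext hw H (Nat.lt_succ_iff.mp (Finset.mem_range.mp ht)), Finset.sum_mul]
    apply Finset.sum_congr rfl
    intro s _
    ring
  have e2 : ∀ s ∈ range (n+1), coeff s H * coeff n ((substPS u w) ^ s)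
      = ∑ t ∈ range (n+1), coeff s H * (coeff t (w ^ s) * coeff n (u ^ t)) := by
    intro s _
    rw [← substPS_pow hu w s, coeff_substPS, Finset.mul_sum]
  rw [Finset.sum_congr rfl e1, Finset.sum_congr rfl e2, Finset.sum_comm]

lemma constCoeff_XF (F : PowerSeries ℝ) (e : ℕ) :
    constantCoeff (X * F ^ e) = 0 := by
  rw [map_mul, PowerSeries.constantCoeff_X, zero_mul]

lemma coeff_XFpow (F : PowerSeries ℝ) (e s n : ℕ) :
    coeff n ((X * F ^ e) ^ s)
      = if s ≤ n then
          ∑ i ∈ Finset.Nat.antidiagonalTuple (s*e) (n-s), ∏ j, coeff (i j) F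
        else 0 := by
  have e1 : (X * F ^ e) ^ s = X ^ s * F ^ (s*e) := by
    rw [mul_pow, ← pow_mul']
  rw [e1, PowerSeries.coeff_X_pow_mul']
  split_ifs with h
  · rw [coeff_pow_tuple]
  · rfl

lemma coeff_substPS_XF (F H : PowerSeries ℝ) (e : ℕ) {n : ℕ} (hn : 1 ≤ n) :
    coeff n (substPS (X * F ^ e) H)
      = ∑ s ∈ Finset.Icc 1 n, coeff s H *
          ∑ i ∈ Finset.Nat.antidiagonalTuple (s*e) (n-s), ∏ j, coeff (i j) F := by
  rw [coeff_substPS]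
  have h2 : range (n+1) = insert 0 (Finset.Icc 1 n) := by
    ext a; simp [Nat.lt_succ_iff]; omega
  rw [h2, Finset.sum_insert (by simp)]
  have h0 : coeff 0 H * coeff n ((X*F^e)^0) = 0 := by
    rw [pow_zero, PowerSeries.coeff_one, if_neg (by omega), mul_zero]
  rw [h0, zero_add]
  apply Finset.sum_congr rfl
  intro s hs
  obtain ⟨hs1, hsn⟩ := Finset.mem_Icc.mp hs
  rw [coeff_XFpow, if_pos hsn]

lemma coeff_zero_substPS (V H : PowerSeries ℝ) :
    coeff 0 (substPS V H) = coeff 0 H := by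
  rw [coeff_substPS]
  simp

lemma substPS_inj {F : PowerSeries ℝ} (hF : constantCoeff F = 1) (e : ℕ)
    {H₁ H₂ : PowerSeries ℝ} (h : substPS (X * F ^ e) H₁ = substPS (X * F ^ e) H₂) :
    H₁ = H₂ := by
  ext n
  induction n using Nat.strong_induction_on with
  | _ n IH =>
    have hc := congrArg (coeff n) h
    rw [coeff_substPS, coeff_substPS, Finset.sum_range_succ, Finset.sum_range_succ] at hc
    have e0 : coeff n ((X*F^e)^n) = 1 := by
      rw [coeff_XFpow, if_pos le_rfl, Nat.sub_self]
      rw [Finset.Nat.antidiagonalTuple_zero_right, Finset.sum_singleton]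
      simp [coeff_zero_eq_constantCoeff_apply, hF]
    have esum : ∑ s ∈ range n, coeff s H₁ * coeff n ((X*F^e)^s)
        = ∑ s ∈ range n, coeff s H₂ * coeff n ((X*F^e)^s) :=
      Finset.sum_congr rfl fun s hs => by rw [IH s (Finset.mem_range.mp hs)]
    rw [e0, mul_one, mul_one, esum] at hc
    linarith

lemma wc_mul_pow_le {t : ℝ} (ht : 0 ≤ t) (n : ℕ) : wc n * t ^ n ≤ t ^ n := by
  calc wc n * t ^ n ≤ 1 * t ^ n :=
        mul_le_mul_of_nonneg_right (wc_le_one n) (pow_nonneg ht n)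
    _ = t ^ n := one_mul _

/-- A moment sequence is exponentially bounded iff the corresponding free cumulant
sequence is exponentially bounded. Here `p = 2q` with `q ≥ 1`, and `m` is determined
from `κ` by the moment–cumulant recursion. -/
theorem stmt8 (q : ℕ) (hq : 1 ≤ q) (κ m : ℕ → ℝ)
    (hm0 : m 0 = 1)
    (hrec : ∀ n : ℕ, 1 ≤ n →
      m n = ∑ s ∈ Finset.Icc 1 n, κ s *
        ∑ i ∈ Finset.Nat.antidiagonalTuple (s * q) (n - s), ∏ j, m (i j)) :
    (∃ A : ℝ, 0 < A ∧ ∀ n : ℕ, 1 ≤ n → |m n| ≤ A ^ n) ↔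
      (∃ B : ℝ, 0 < B ∧ ∀ n : ℕ, 1 ≤ n → |κ n| ≤ B ^ n) := by
  constructor
  · -- moments bounded → cumulants bounded
    rintro ⟨A, hA, hmA⟩
    set M : PowerSeries ℝ := PowerSeries.mk m with hMdef
    set C : PowerSeries ℝ := PowerSeries.mk (fun s => if s = 0 then (1:ℝ) else κ s)
      with hCdef
    have hM0 : constantCoeff M = 1 := by
      rw [hMdef, constantCoeff_mk, hm0]
    have hC0 : constantCoeff C = 1 := by
      rw [hCdef, constantCoeff_mk]
      simp
    have hu0 : constantCoeff (X * M ^ q) = 0 := constCoeff_XF M q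
    have hw0 : constantCoeff (X * C⁻¹ ^ q) = 0 := constCoeff_XF C⁻¹ q
    have R1 : substPS (X * M ^ q) C = M := by
      ext n
      rcases Nat.eq_zero_or_pos n with rfl | hn
      · rw [coeff_zero_substPS, hCdef, coeff_mk, hMdef, coeff_mk, hm0]
        simp
      · rw [coeff_substPS_XF M C q hn, hMdef, coeff_mk, hrec n hn]
        apply Finset.sum_congr rfl
        intro s hs
        obtain ⟨hs1, _⟩ := Finset.mem_Icc.mp hs
        rw [hCdef, coeff_mk, if_neg (by omega)]
        congr 1
        apply Finset.sum_congr rfl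
        intro i _
        apply Finset.prod_congr rfl
        intro j _
        rw [coeff_mk]
    have hMinv : M * M⁻¹ = 1 :=
      PowerSeries.mul_inv_cancel M (by rw [hM0]; exact one_ne_zero)
    have hCinv : C * C⁻¹ = 1 :=
      PowerSeries.mul_inv_cancel C (by rw [hC0]; exact one_ne_zero)
    have hPhiG : substPS (X * M ^ q) C⁻¹ = M⁻¹ := by
      have h1 : substPS (X * M ^ q) C⁻¹ * M = 1 := by
        have e : substPS (X * M ^ q) C⁻¹ * M = substPS (X * M ^ q) (C⁻¹ * C) := by
          rw [substPS_mul hu0, R1]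
        have e2 : C⁻¹ * C = 1 := by rw [mul_comm]; exact hCinv
        rw [e, e2, substPS_one]
      calc substPS (X * M ^ q) C⁻¹
          = substPS (X * M ^ q) C⁻¹ * (M * M⁻¹) := by rw [hMinv, mul_one]
        _ = (substPS (X * M ^ q) C⁻¹ * M) * M⁻¹ := by rw [mul_assoc]
        _ = 1 * M⁻¹ := by rw [h1]
        _ = M⁻¹ := one_mul _
    have hvu : substPS (X * M ^ q) (X * C⁻¹ ^ q) = X := by
      rw [substPS_mul hu0, substPS_X hu0, substPS_pow hu0, hPhiG]
      have h2 : M ^ q * (M⁻¹) ^ q = 1 := by rw [← mul_pow, hMinv, one_pow]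
      rw [mul_assoc, h2, mul_one]
    have R2 : substPS (X * C⁻¹ ^ q) M⁻¹ = C⁻¹ := by
      apply substPS_inj hM0 q
      rw [substPS_assoc hu0 hw0, hvu, substPS_X_left, hPhiG]
    -- coefficient sequences
    set g : ℕ → ℝ := fun n => coeff n (C⁻¹) with hgdef
    set mt : ℕ → ℝ := fun n => coeff n (M⁻¹) with hmtdef
    have hg0 : g 0 = 1 := by
      have h1 := congrArg (constantCoeff) hCinv
      rw [map_mul, hC0, one_mul, map_one] at h1
      rw [hgdef]
      simpa [coeff_zero_eq_constantCoeff_apply] using h1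
    have hmt0 : mt 0 = 1 := by
      have h1 := congrArg (constantCoeff) hMinv
      rw [map_mul, hM0, one_mul, map_one] at h1
      rw [hmtdef]
      simpa [coeff_zero_eq_constantCoeff_apply] using h1
    have hrelM : ∀ n, 1 ≤ n → ∑ p ∈ antidiagonal n, m p.1 * mt p.2 = 0 := by
      intro n hn
      have h1 := congrArg (coeff n) hMinv
      rw [PowerSeries.coeff_mul, PowerSeries.coeff_one, if_neg (by omega)] at h1
      rw [← h1]
      apply Finset.sum_congr rfl
      intro p _
      rw [hMdef, coeff_mk]
    have hmtB : ∀ n, 1 ≤ n → |mt n| ≤ (36 * A) ^ n := by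
      intro n hn
      have h1 := recip_bound m mt A hA hm0 hmt0 (fun s hs => hmA s hs) hrelM n
      exact h1.trans (wc_mul_pow_le (by positivity) n)
    have hgrec : ∀ n, 1 ≤ n → g n = ∑ s ∈ Finset.Icc 1 n, mt s *
        ∑ i ∈ Finset.Nat.antidiagonalTuple (s * q) (n - s), ∏ j, g (i j) := by
      intro n hn
      have h1 := congrArg (coeff n) R2
      rw [coeff_substPS_XF (C⁻¹) (M⁻¹) q hn] at h1
      exact h1.symm
    set A2 : ℝ := 8 * (36 * A) * 16 ^ q with hA2def
    have hA2 : 0 < A2 := by rw [hA2def]; positivity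
    have hgB : ∀ n, 1 ≤ n → |g n| ≤ A2 ^ n := by
      intro n hn
      have h1 := moment_bound q hq mt g (36 * A) (by positivity) hg0 hmtB hgrec n
      exact h1.trans (wc_mul_pow_le hA2.le n)
    have hrelC : ∀ n, 1 ≤ n →
        ∑ p ∈ antidiagonal n, g p.1 * coeff p.2 C = 0 := by
      intro n hn
      have hGC : C⁻¹ * C = 1 := by rw [mul_comm]; exact hCinv
      have h1 := congrArg (coeff n) hGC
      rw [PowerSeries.coeff_mul, PowerSeries.coeff_one, if_neg (by omega)] at h1
      exact h1
    have hκB := recip_bound g (fun n => coeff n C) A2 hA2 hg0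
      (by simpa [coeff_zero_eq_constantCoeff_apply] using hC0) hgB hrelC
    refine ⟨36 * A2, by positivity, fun n hn => ?_⟩
    have h1 : |coeff n C| ≤ wc n * (36 * A2) ^ n := hκB n
    have h2 : coeff n C = κ n := by
      rw [hCdef, coeff_mk, if_neg (by omega)]
    rw [h2] at h1
    exact h1.trans (wc_mul_pow_le (by positivity) n)
  · -- cumulants bounded → moments bounded
    rintro ⟨B, hB, hκB⟩
    refine ⟨8 * B * 16 ^ q, by positivity, fun n hn => ?_⟩
    have h1 := moment_bound q hq κ m B hB hm0 (fun s hs => hκB s hs) hrec n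
    exact h1.trans (wc_mul_pow_le (by positivity) n)
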